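/- arXiv:0803.0503 — 2 statements merged into one kernel-verified Lean document; each statement's English description precedes it below -/
import Mathlib

section
/- Let p ≥ 1. Then for all real t with 0 ≤ t ≤ 1 and all complex numbers a, one has |a−t|^p ≥ (1−t)^{p−1} (|a|^p − t). Moreover, if p > 1, the inequality is strict unless a = 1 or t = 0. -/
/-!
Put `w = (1 - t)⁻¹ • (a - t • e)`, so that `a = t • e + (1 - t) • w` is a convex combination.
Convexity of `‖·‖ ^ p` gives `‖a‖ ^ p ≤ t + (1 - t) ‖w‖ ^ p = t + (1 - t) ^ (1 - p) ‖a - t • e‖ ^ p`,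
which is the inequality. For `p > 1` in a strictly convex space `‖·‖ ^ p` is strictly convex, so
the inequality is strict once `w ≠ e`, i.e. `a ≠ e`. The endpoint `t = 1` is checked directly.
-/

open Real Set

section

variable {E : Type*}

theorem convexOn_norm_rpow [SeminormedAddCommGroup E] [NormedSpace ℝ E] {p : ℝ} (hp : 1 ≤ p) :
    ConvexOn ℝ univ fun x : E => ‖x‖ ^ p := by
  refine ⟨convex_univ, fun x _ y _ a b ha hb hab => ?_⟩
  calc ‖a • x + b • y‖ ^ p ≤ (a * ‖x‖ + b * ‖y‖) ^ p := by
        gcongr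
        exact convexOn_univ_norm.2 (mem_univ x) (mem_univ y) ha hb hab
    _ ≤ a * ‖x‖ ^ p + b * ‖y‖ ^ p :=
        (convexOn_rpow hp).2 (norm_nonneg x) (norm_nonneg y) ha hb hab

theorem strictConvexOn_norm_rpow [NormedAddCommGroup E] [NormedSpace ℝ E] [StrictConvexSpace ℝ E]
    {p : ℝ} (hp : 1 < p) : StrictConvexOn ℝ univ fun x : E => ‖x‖ ^ p := by
  refine ⟨convex_univ, fun x _ y _ hxy a b ha hb hab => ?_⟩
  rcases eq_or_ne ‖x‖ ‖y‖ with hn | hn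
  · calc ‖a • x + b • y‖ ^ p < ‖x‖ ^ p := by
          gcongr
          exact norm_combo_lt_of_ne le_rfl hn.ge hxy ha hb hab
      _ = a * ‖x‖ ^ p + b * ‖y‖ ^ p := by rw [← hn, ← add_mul, hab, one_mul]
  · calc ‖a • x + b • y‖ ^ p ≤ (a * ‖x‖ + b * ‖y‖) ^ p := by
          gcongr
          exact convexOn_univ_norm.2 (mem_univ x) (mem_univ y) ha.le hb.le hab
      _ < a * ‖x‖ ^ p + b * ‖y‖ ^ p :=
          (strictConvexOn_rpow hp).2 (norm_nonneg x) (norm_nonneg y) hn ha hb hab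

theorem rpow_sub_one_mul_mul_norm_inv_smul_rpow [SeminormedAddCommGroup E] [NormedSpace ℝ E]
    {c : ℝ} (hc : 0 < c) (p : ℝ) (x : E) :
    c ^ (p - 1) * (c * ‖c⁻¹ • x‖ ^ p) = ‖x‖ ^ p := by
  rw [norm_smul, norm_inv, Real.norm_of_nonneg hc.le, mul_rpow (inv_nonneg.2 hc.le) (norm_nonneg x),
    inv_rpow hc.le, ← mul_assoc, ← rpow_add_one hc.ne', sub_add_cancel]
  field_simp

theorem smul_add_one_sub_smul_inv_smul_sub [AddCommGroup E] [Module ℝ E] {t : ℝ} (ht : t ≠ 1)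
    (e a : E) : t • e + (1 - t) • (1 - t)⁻¹ • (a - t • e) = a := by
  rw [smul_inv_smul₀ (sub_ne_zero.2 ht.symm), add_sub_cancel]

variable {p t : ℝ} {e : E}

theorem one_sub_rpow_mul_norm_rpow_sub_le [SeminormedAddCommGroup E] [NormedSpace ℝ E]
    (hp : 1 ≤ p) (ht0 : 0 ≤ t) (ht1 : t ≤ 1) (he : ‖e‖ = 1) (a : E) :
    (1 - t) ^ (p - 1) * (‖a‖ ^ p - t) ≤ ‖a - t • e‖ ^ p := by
  rcases ht1.lt_or_eq with ht1 | rfl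
  · have hc : 0 < 1 - t := sub_pos.2 ht1
    have hconv := (convexOn_norm_rpow hp).2 (mem_univ e) (mem_univ ((1 - t)⁻¹ • (a - t • e)))
      ht0 hc.le (by ring)
    simp only [smul_add_one_sub_smul_inv_smul_sub ht1.ne, he, one_rpow, smul_eq_mul,
      mul_one] at hconv
    calc (1 - t) ^ (p - 1) * (‖a‖ ^ p - t)
        ≤ (1 - t) ^ (p - 1) * ((1 - t) * ‖(1 - t)⁻¹ • (a - t • e)‖ ^ p) := by gcongr; linarith
      _ = ‖a - t • e‖ ^ p := rpow_sub_one_mul_mul_norm_inv_smul_rpow hc p _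
  · rcases hp.eq_or_lt with rfl | hp
    -- `0 ^ 0 = 1`, so at `t = p = 1` this is the reverse triangle inequality.
    · simpa [he] using norm_sub_norm_le a e
    · rw [sub_self, zero_rpow (by linarith), zero_mul]
      positivity

theorem one_sub_rpow_mul_norm_rpow_sub_lt [NormedAddCommGroup E] [NormedSpace ℝ E]
    [StrictConvexSpace ℝ E] (hp : 1 < p) (ht0 : 0 < t) (ht1 : t ≤ 1) (he : ‖e‖ = 1) {a : E}
    (hae : a ≠ e) :
    (1 - t) ^ (p - 1) * (‖a‖ ^ p - t) < ‖a - t • e‖ ^ p := by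
  rcases ht1.lt_or_eq with ht1 | rfl
  · have hc : 0 < 1 - t := sub_pos.2 ht1
    have hne : e ≠ (1 - t)⁻¹ • (a - t • e) := fun h => hae <| by
      rw [← smul_add_one_sub_smul_inv_smul_sub ht1.ne e a, ← h, ← add_smul, add_sub_cancel,
        one_smul]
    have hconv := (strictConvexOn_norm_rpow hp).2 (mem_univ e)
      (mem_univ ((1 - t)⁻¹ • (a - t • e))) hne ht0 hc (by ring)
    simp only [smul_add_one_sub_smul_inv_smul_sub ht1.ne, he, one_rpow, smul_eq_mul,
      mul_one] at hconv
    calc (1 - t) ^ (p - 1) * (‖a‖ ^ p - t)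
        < (1 - t) ^ (p - 1) * ((1 - t) * ‖(1 - t)⁻¹ • (a - t • e)‖ ^ p) := by gcongr; linarith
      _ = ‖a - t • e‖ ^ p := rpow_sub_one_mul_mul_norm_inv_smul_rpow hc p _
  · rw [sub_self, zero_rpow (by linarith), zero_mul, one_smul]
    exact rpow_pos_of_pos (norm_pos_iff.2 (sub_ne_zero.2 hae)) p

end

/-- Lemma 2.6, first part: for `p ≥ 1`, `0 ≤ t ≤ 1` and `a ∈ ℂ`,
`|a−t|^p ≥ (1−t)^{p−1} (|a|^p − t)`, with strict inequality for `p > 1` unless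
`a = 1` or `t = 0`. -/
theorem elementary_inequality (p : ℝ) (hp : 1 ≤ p) (t : ℝ) (ht0 : 0 ≤ t) (ht1 : t ≤ 1)
    (a : ℂ) :
    (1 - t) ^ (p - 1) * (‖a‖ ^ p - t) ≤ ‖a - (t : ℂ)‖ ^ p ∧
    (1 < p → a ≠ 1 → t ≠ 0 →
      (1 - t) ^ (p - 1) * (‖a‖ ^ p - t) < ‖a - (t : ℂ)‖ ^ p) := by
  have hte : t • (1 : ℂ) = t := by simp
  rw [← hte]
  exact ⟨one_sub_rpow_mul_norm_rpow_sub_le hp ht0 ht1 norm_one a,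
    fun hp ha ht => one_sub_rpow_mul_norm_rpow_sub_lt hp (ht0.lt_of_ne' ht) ht1 norm_one ha⟩
end

section
/- Let N ≥ 1, 0 < s ≤ 1, 1 ≤ p < N/s, and set p* := Np/(N−ps). Let u be a nonnegative symmetric decreasing function on ℝ^N, i.e. u(x) = g(|x|) for a nonincreasing function g : [0,∞) → [0,∞), and assume that μ_u(t) := |{x : u(x) > t}| is finite for every t > 0. Then ‖u‖_{p*,p}^p = (N/|𝕊^{N−1}|)^{ps/N} ∫_{ℝ^N} u(x)^p |x|^{−ps} dx, where |𝕊^{N−1}| denotes the surface measure of the unit sphere in ℝ^N. -/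
/-!
A superlevel set `{u > t}` of a radially nonincreasing function lies between the open and the
closed ball of the same radius, so it agrees a.e. with a ball. In polar coordinates, the
weight `‖x‖ ^ (-a)` integrates over a ball of volume `V` to
`d / (d - a) * ω ^ (a / d) * V ^ ((d - a) / d)`, where `d` is the dimension and `ω` the volume
of the unit ball. The layer-cake formula for `u ^ p` with respect to the measure
`‖x‖ ^ (-a) dx` therefore turns `∫ u ^ p ‖x‖ ^ (-a)` into a multiple of
`∫ t ^ (p - 1) μ_u(t) ^ ((d - a) / d) dt`, which for `a = p s` is the Lorentz integral,
because `p / p* = (N - p s) / N`.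
-/

open MeasureTheory Real
open scoped ENNReal

/-- Surface measure of the unit sphere 𝕊^{n-1} in ℝ^n: n times the unit ball volume. -/
noncomputable def sphereArea (n : ℕ) : ℝ :=
  n * (volume (Metric.ball (0 : EuclideanSpace ℝ (Fin n)) 1)).toReal

/-- The Lorentz quasinorm `‖u‖_{q,r} = (q ∫_0^∞ μ_u(t)^{r/q} t^{r−1} dt)^{1/r}`, where
`μ_u(t) = |{x : |u(x)| > t}|`. -/
noncomputable def lorentzNorm (N : ℕ) (q r : ℝ) (u : EuclideanSpace ℝ (Fin N) → ℝ) : ℝ≥0∞ :=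
  (ENNReal.ofReal q * ∫⁻ t in Set.Ioi (0 : ℝ),
    volume {x | t < |u x|} ^ (r / q) * ENNReal.ofReal (t ^ (r - 1))) ^ (1 / r)

open Module Metric Set

lemma pow_sub_one_mul_rpow_neg {n : ℕ} (hn : n ≠ 0) {a y : ℝ} (hy : 0 < y) :
    y ^ (n - 1) * y ^ (-a) = y ^ ((n : ℝ) - a - 1) := by
  rw [← Real.rpow_natCast, ← Real.rpow_add hy, Nat.cast_sub (Nat.one_le_iff_ne_zero.mpr hn),
    Nat.cast_one]
  ring_nf

section NormRpow

variable {E : Type*} [NormedAddCommGroup E] [NormedSpace ℝ E] [FiniteDimensional ℝ E]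
  [Nontrivial E] [MeasurableSpace E] [BorelSpace E] (μ : Measure E) [μ.IsAddHaarMeasure]

lemma integrableOn_ball_norm_rpow_neg {a : ℝ} (ha : a < finrank ℝ E) (r : ℝ) :
    IntegrableOn (fun x : E ↦ ‖x‖ ^ (-a)) (ball 0 r) μ := by
  rw [integrableOn_fun_norm_addHaar μ (f := fun y ↦ y ^ (-a))]
  simp only [smul_eq_mul]
  rw [integrableOn_congr_fun (fun y hy ↦ pow_sub_one_mul_rpow_neg finrank_pos.ne' hy.1)
    measurableSet_Ioo]
  exact (intervalIntegral.intervalIntegrable_rpow' (by linarith)).1.mono_set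
    (Ioo_subset_Ioc_self.trans Ioc_subset_uIoc)

lemma integral_ball_norm_rpow_neg {a : ℝ} (ha : a < finrank ℝ E) {r : ℝ} (hr : 0 ≤ r) :
    ∫ x in ball 0 r, ‖x‖ ^ (-a) ∂μ
      = finrank ℝ E / (finrank ℝ E - a) * r ^ ((finrank ℝ E : ℝ) - a) * μ.real (ball 0 1) := by
  have hind : (ball (0 : E) r).indicator (fun x ↦ ‖x‖ ^ (-a))
      = fun x ↦ (Iio r).indicator (fun y ↦ y ^ (-a)) ‖x‖ := by
    ext x
    simp [indicator]
  have hradial : ∫ y in Ioi (0 : ℝ), y ^ (finrank ℝ E - 1) • (Iio r).indicator (· ^ (-a)) y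
      = r ^ ((finrank ℝ E : ℝ) - a) / (finrank ℝ E - a) := by
    simp_rw [← indicator_smul, setIntegral_indicator measurableSet_Iio, Ioi_inter_Iio, smul_eq_mul]
    rw [setIntegral_congr_fun measurableSet_Ioo
        (fun y hy ↦ pow_sub_one_mul_rpow_neg finrank_pos.ne' hy.1),
      ← integral_Ioc_eq_integral_Ioo, ← intervalIntegral.integral_of_le hr,
      integral_rpow (Or.inl (by linarith)), Real.zero_rpow (by linarith)]
    ring_nf
  rw [← integral_indicator measurableSet_ball, hind, integral_fun_norm_addHaar, hradial]
  simp only [nsmul_eq_mul, smul_eq_mul]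
  ring

lemma setLIntegral_norm_rpow_neg_of_ae_eq_ball {a : ℝ} (ha : a < finrank ℝ E) {S : Set E}
    {r : ℝ} (hr : 0 ≤ r) (hS : S =ᵐ[μ] ball 0 r) :
    ∫⁻ x in S, ENNReal.ofReal (‖x‖ ^ (-a)) ∂μ
      = ENNReal.ofReal (finrank ℝ E / (finrank ℝ E - a)) * μ (ball 0 1) ^ (a / finrank ℝ E)
        * μ S ^ ((finrank ℝ E - a) / finrank ℝ E) := by
  set d : ℝ := (finrank ℝ E : ℝ)
  have hd : 0 < d := by simp [d, finrank_pos]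
  have hda : 0 < d - a := by linarith
  set w := μ.real (ball (0 : E) 1)
  have hw : 0 < w :=
    ENNReal.toReal_pos (measure_ball_pos μ 0 one_pos).ne' measure_ball_lt_top.ne
  have hball : μ (ball (0 : E) 1) = ENNReal.ofReal w :=
    (ofReal_measureReal measure_ball_lt_top.ne).symm
  rw [setLIntegral_congr hS, ← ofReal_integral_eq_lintegral_ofReal
      (integrableOn_ball_norm_rpow_neg μ ha r)
      (ae_of_all _ fun x ↦ Real.rpow_nonneg (norm_nonneg x) _),
    integral_ball_norm_rpow_neg μ ha hr, measure_congr hS, μ.addHaar_ball 0 hr, hball,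
    ← ENNReal.ofReal_mul (by positivity), ENNReal.ofReal_rpow_of_pos hw,
    ENNReal.ofReal_rpow_of_nonneg (by positivity) (by positivity),
    ← ENNReal.ofReal_mul (by positivity), ← ENNReal.ofReal_mul (by positivity)]
  congr 1
  change d / (d - a) * r ^ (d - a) * w = _
  rw [Real.mul_rpow (by positivity) hw.le, ← Real.rpow_natCast, ← Real.rpow_mul hr,
    mul_div_cancel₀ _ hd.ne']
  have hw_split : w ^ (a / d) * w ^ ((d - a) / d) = w := by
    rw [← Real.rpow_add hw, ← add_div, add_sub_cancel, div_self hd.ne', Real.rpow_one]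
  linear_combination (-(d / (d - a) * r ^ (d - a))) * hw_split

lemma exists_ae_eq_ball_of_mem_of_norm_le {S : Set E}
    (hS : ∀ ⦃x y : E⦄, ‖x‖ ≤ ‖y‖ → y ∈ S → x ∈ S) (hμS : μ S ≠ ∞) :
    ∃ r, 0 ≤ r ∧ S =ᵐ[μ] ball 0 r := by
  rcases S.eq_empty_or_nonempty with rfl | hne
  · exact ⟨0, le_rfl, by simp⟩
  have hbdd : BddAbove (norm '' S) := by
    by_contra hunb
    have huniv : S = univ := eq_univ_of_forall fun x ↦ by
      obtain ⟨_, ⟨y, hy, rfl⟩, hxy⟩ := not_bddAbove_iff.mp hunb ‖x‖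
      exact hS hxy.le hy
    exact hμS (huniv ▸ measure_univ_of_isAddLeftInvariant μ)
  set r := sSup (norm '' S)
  have hball : ball 0 r ⊆ S := fun x hx ↦ by
    obtain ⟨_, ⟨y, hy, rfl⟩, hxy⟩ :=
      exists_lt_of_lt_csSup (hne.image _) (mem_ball_zero_iff.mp hx)
    exact hS hxy.le hy
  have hclosedBall : S ⊆ closedBall 0 r := fun x hx ↦
    mem_closedBall_zero_iff.mpr (le_csSup hbdd (mem_image_of_mem _ hx))
  refine ⟨r, Real.sSup_nonneg (by grind [norm_nonneg]),
    ae_eq_set.mpr ⟨?_, by simp [sdiff_eq_empty.mpr hball]⟩⟩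
  refine measure_mono_null (t := sphere 0 r) ?_ (μ.addHaar_sphere 0 r)
  rw [← closedBall_sdiff_ball]
  exact sdiff_subset_sdiff_left hclosedBall

lemma lintegral_rpow_mul_norm_rpow_neg_eq_lintegral_meas_lt_rpow_mul {u : E → ℝ}
    (hu0 : ∀ x, 0 ≤ u x) (hum : Measurable u) (hu : ∀ ⦃x y : E⦄, ‖x‖ ≤ ‖y‖ → u y ≤ u x)
    (hμ : ∀ t > 0, μ {x | t < u x} ≠ ∞) {p a : ℝ} (hp : 0 < p) (ha : a < finrank ℝ E) :
    ∫⁻ x, ENNReal.ofReal (u x ^ p * ‖x‖ ^ (-a)) ∂μ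
      = μ (ball 0 1) ^ (a / finrank ℝ E) * ENNReal.ofReal (p * (finrank ℝ E / (finrank ℝ E - a)))
        * ∫⁻ t in Ioi 0, μ {x | t < u x} ^ ((finrank ℝ E - a) / finrank ℝ E)
            * ENNReal.ofReal (t ^ (p - 1)) ∂volume := by
  set w : E → ℝ≥0∞ := fun x ↦ ENNReal.ofReal (‖x‖ ^ (-a))
  have hw : Measurable w := (measurable_norm.pow_const _).ennreal_ofReal
  have hsuperlevel : ∀ t ∈ Ioi (0 : ℝ), μ.withDensity w {x | t < u x}
      = ENNReal.ofReal (finrank ℝ E / (finrank ℝ E - a)) * μ (ball 0 1) ^ (a / finrank ℝ E)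
        * μ {x | t < u x} ^ ((finrank ℝ E - a) / finrank ℝ E) := fun t ht ↦ by
    obtain ⟨r, hr, hball⟩ := exists_ae_eq_ball_of_mem_of_norm_le μ (S := {x | t < u x})
      (fun x y hxy hy ↦ lt_of_lt_of_le hy (hu hxy)) (hμ t ht)
    rw [withDensity_apply _ (measurableSet_lt measurable_const hum),
      setLIntegral_norm_rpow_neg_of_ae_eq_ball μ ha hr hball]
  calc ∫⁻ x, ENNReal.ofReal (u x ^ p * ‖x‖ ^ (-a)) ∂μ
      = ∫⁻ x, ENNReal.ofReal (u x ^ p) ∂μ.withDensity w := by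
        rw [lintegral_withDensity_eq_lintegral_mul _ hw (hum.pow_const p).ennreal_ofReal]
        refine lintegral_congr fun x ↦ ?_
        rw [Pi.mul_apply, ← ENNReal.ofReal_mul (by positivity), mul_comm]
    _ = _ := by
        rw [lintegral_rpow_eq_lintegral_meas_lt_mul _ (ae_of_all _ hu0) hum.aemeasurable hp,
          setLIntegral_congr_fun measurableSet_Ioi (fun t ht ↦ by rw [hsuperlevel t ht]),
          ENNReal.ofReal_mul hp.le]
        simp_rw [mul_assoc]
        rw [lintegral_const_mul' _ _ ENNReal.ofReal_ne_top, lintegral_const_mul' _ _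
          (ENNReal.rpow_ne_top_of_ne_zero (measure_ball_pos μ 0 one_pos).ne'
            measure_ball_lt_top.ne)]
        ring

end NormRpow

lemma lorentzNorm_rpow (N : ℕ) (q : ℝ) {r : ℝ} (hr : r ≠ 0) (u : EuclideanSpace ℝ (Fin N) → ℝ) :
    lorentzNorm N q r u ^ r = ENNReal.ofReal q * ∫⁻ t in Ioi (0 : ℝ),
      volume {x | t < |u x|} ^ (r / q) * ENNReal.ofReal (t ^ (r - 1)) := by
  rw [lorentzNorm, ← ENNReal.rpow_mul, one_div_mul_cancel hr, ENNReal.rpow_one]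

lemma ofReal_div_sphereArea_rpow_mul_volume_ball_rpow {N : ℕ} (hN : N ≠ 0) (b : ℝ) :
    ENNReal.ofReal ((N / sphereArea N) ^ b)
      * volume (ball (0 : EuclideanSpace ℝ (Fin N)) 1) ^ b = 1 := by
  set ω := volume (ball (0 : EuclideanSpace ℝ (Fin N)) 1)
  have hω : 0 < ω.toReal :=
    ENNReal.toReal_pos (measure_ball_pos _ 0 one_pos).ne' measure_ball_lt_top.ne
  rw [sphereArea, div_mul_cancel_left₀ (Nat.cast_ne_zero.mpr hN),
    ← ENNReal.ofReal_toReal (a := ω) measure_ball_lt_top.ne, ENNReal.ofReal_rpow_of_pos hω,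
    ← ENNReal.ofReal_mul (by positivity), ← Real.mul_rpow (by positivity) hω.le,
    inv_mul_cancel₀ hω.ne', Real.one_rpow, ENNReal.ofReal_one]

theorem lorentz_norm_of_symmDecreasing_general (N : ℕ) (hN : 1 ≤ N) (s p : ℝ)
    (hs0 : 0 < s) (hp1 : 1 ≤ p) (hp : p < (N : ℝ) / s)
    (u : EuclideanSpace ℝ (Fin N) → ℝ) (g : ℝ → ℝ)
    (hg_anti : AntitoneOn g (Set.Ici 0)) (hg_nonneg : ∀ r, 0 ≤ r → 0 ≤ g r)
    (hug : ∀ x, u x = g ‖x‖)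
    (hμ : ∀ t > (0 : ℝ), volume {x : EuclideanSpace ℝ (Fin N) | t < u x} < ⊤) :
    lorentzNorm N ((N : ℝ) * p / ((N : ℝ) - p * s)) p u ^ p
      = ENNReal.ofReal (((N : ℝ) / sphereArea N) ^ (p * s / (N : ℝ)))
        * ∫⁻ x, ENNReal.ofReal (u x ^ p * ‖x‖ ^ (-(p * s))) := by
  have : NeZero N := ⟨by omega⟩ -- makes `EuclideanSpace ℝ (Fin N)` nontrivial
  have hp0 : 0 < p := by linarith
  have hpsN : p * s < N := (lt_div_iff₀ hs0).mp hp
  have hu0 : ∀ x, 0 ≤ u x := fun x ↦ hug x ▸ hg_nonneg _ (norm_nonneg x)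
  have hum : Measurable u := by
    have hanti : Antitone fun r ↦ g (max r 0) := fun r r' hrr' ↦
      hg_anti (le_max_right r 0) (le_max_right r' 0) (max_le_max_right 0 hrr')
    rw [show u = fun x ↦ g (max ‖x‖ 0) from
      funext fun x ↦ by rw [hug, max_eq_left (norm_nonneg x)]]
    exact hanti.measurable.comp measurable_norm
  have hu : ∀ ⦃x y : EuclideanSpace ℝ (Fin N)⦄, ‖x‖ ≤ ‖y‖ → u y ≤ u x := fun x y hxy ↦ by
    simpa only [hug] using hg_anti (norm_nonneg x) (norm_nonneg y) hxy
  rw [lintegral_rpow_mul_norm_rpow_neg_eq_lintegral_meas_lt_rpow_mul volume hu0 hum hu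
      (fun t ht ↦ (hμ t ht).ne) hp0 (by rwa [finrank_euclideanSpace_fin]),
    finrank_euclideanSpace_fin, lorentzNorm_rpow _ _ hp0.ne']
  simp only [abs_of_nonneg (hu0 _)]
  rw [show p / (N * p / (N - p * s)) = (N - p * s) / N by field_simp, ← mul_assoc, ← mul_assoc,
    ofReal_div_sphereArea_rpow_mul_volume_ball_rpow (by omega), one_mul, mul_comm (N : ℝ) p,
    mul_div_assoc]

/-- Lemma 4.4: for a nonnegative symmetric decreasing `u`,
`‖u‖_{p*,p}^p = (N/|𝕊^{N−1}|)^{ps/N} ∫ u(x)^p |x|^{−ps} dx` with `p* = Np/(N−ps)`,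
for `0 < s ≤ 1` and `1 ≤ p < N/s`. -/
theorem lorentz_norm_of_symmDecreasing (N : ℕ) (hN : 1 ≤ N) (s p : ℝ)
    (hs0 : 0 < s) (hs1 : s ≤ 1) (hp1 : 1 ≤ p) (hp : p < (N : ℝ) / s)
    (u : EuclideanSpace ℝ (Fin N) → ℝ) (g : ℝ → ℝ)
    (hg_anti : AntitoneOn g (Set.Ici 0)) (hg_nonneg : ∀ r, 0 ≤ r → 0 ≤ g r)
    (hug : ∀ x, u x = g ‖x‖)
    (hμ : ∀ t > (0 : ℝ), volume {x : EuclideanSpace ℝ (Fin N) | t < u x} < ⊤) :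
    lorentzNorm N ((N : ℝ) * p / ((N : ℝ) - p * s)) p u ^ p
      = ENNReal.ofReal (((N : ℝ) / sphereArea N) ^ (p * s / (N : ℝ)))
        * ∫⁻ x, ENNReal.ofReal (u x ^ p * ‖x‖ ^ (-(p * s))) :=
  lorentz_norm_of_symmDecreasing_general N hN s p hs0 hp1 hp u g hg_anti hg_nonneg hug hμ
end
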